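/- In the E₆⁽¹⁾ birational realization, the maps s₃ and s₄ defined by s₃: (u,v,a₃,a₄) ↦ (u+a₃, v+a₃, −a₃, a₃+a₄) and s₄: (u,v,a₃,a₄) ↦ (u−a₄, v(u−a₄)/u, a₃+a₄, −a₄) satisfy the braid relation s₃ s₄ s₃ = s₄ s₃ s₄ as birational transformations. -/

import Mathlib

/-- The `E₆⁽¹⁾` birational map `s₃ : (u,v,a₃,a₄) ↦ (u+a₃, v+a₃, -a₃, a₃+a₄)`. -/
def S3 {F : Type*} [Field F] : F × F × F × F → F × F × F × F :=
  fun p => (p.1 + p.2.2.1, p.2.1 + p.2.2.1, -p.2.2.1, p.2.2.1 + p.2.2.2)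

/-- The `E₆⁽¹⁾` birational map `s₄ : (u,v,a₃,a₄) ↦ (u-a₄, v(u-a₄)/u, a₃+a₄, -a₄)`. -/
def S4 {F : Type*} [Field F] : F × F × F × F → F × F × F × F :=
  fun p => (p.1 - p.2.2.2, p.2.1 * (p.1 - p.2.2.2) / p.1, p.2.2.1 + p.2.2.2, -p.2.2.2)

section Braid

variable {F : Type*} [Field F] (u v a₃ a₄ : F)

theorem S3_S4_S3_apply :
    S3 (S4 (S3 (u, v, a₃, a₄))) = (u, (v + a₃) * (u - a₄) / (u + a₃) + a₄, -a₄, -a₃) := by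
  simp only [S3, S4, Prod.mk.injEq]
  refine ⟨by ring, by ring, by ring, by ring⟩

theorem S4_S3_S4_apply :
    S4 (S3 (S4 (u, v, a₃, a₄))) =
      (u, (v * (u - a₄) / u + (a₃ + a₄)) * u / (u + a₃), -a₄, -a₃) := by
  simp only [S3, S4, Prod.mk.injEq]
  refine ⟨by ring, by ring, by ring, by ring⟩

variable {u a₃}

theorem S3_S4_braid_snd_eq (hu : u ≠ 0) (hua : u + a₃ ≠ 0) :
    (v + a₃) * (u - a₄) / (u + a₃) + a₄ = (v * (u - a₄) / u + (a₃ + a₄)) * u / (u + a₃) := by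
  field_simp
  ring

end Braid

/-- The maps `s₃` and `s₄` satisfy the braid relation `s₃s₄s₃ = s₄s₃s₄` as
birational transformations (away from the indeterminacy loci `u = 0`, `u + a₃ = 0`). -/
theorem s3_s4_braid (F : Type*) [Field F] (u v a₃ a₄ : F)
    (hu : u ≠ 0) (hua : u + a₃ ≠ 0) :
    S3 (S4 (S3 (u, v, a₃, a₄))) = S4 (S3 (S4 (u, v, a₃, a₄))) := by
  rw [S3_S4_S3_apply, S4_S3_S4_apply, S3_S4_braid_snd_eq v a₄ hu hua]
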